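/- Let 0 < ϱ < 1, and let Φ, w : [0,∞) → ℝ be measurable with ϱ ≤ e^{Φ(y)} ≤ ϱ⁻¹ and w(y) ≥ ϱ for ν-a.e. y, and ∫ w(y)y² dν(y) < ∞. Then for every u ≥ 0, G̃(u,w,Φ) ≥ ϱλσ_Y²·u² − 2u·(ϱλb_Y − (b+λb_Y)) + ϱλ − λϱ⁻¹. In particular there is a constant c₃ > 0 depending only on ϱ, λ, b, b_Y, σ_Y such that G̃(u,w,Φ) > 0 for all u > c₃; since G̃(0,w,Φ) = 0, it follows that inf_{u≥0} G̃(u,w,Φ) = inf_{0≤u≤c₃} G̃(u,w,Φ). -/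

import Mathlib

/-!
Pointwise, `(1 - uy)⁺² + (1 - uy)⁻² = (1 - uy)²`, so the bounds `e^Φ ≥ ϱ`, `w ≥ ϱ` on the two
squares and `e^Φ ≤ ϱ⁻¹` on the constant term give the integrand of `G̃` the lower bound
`ϱ (1 - uy)² - ϱ⁻¹`. Integrating it against `ν` yields a quadratic in `u` with leading
coefficient `ϱλσ_Y² > 0`, which is positive beyond an explicit `c₃`; as `G̃(0) = 0`, the points
`u > c₃` cannot lower the infimum.
-/

open MeasureTheory Real Set

/-- `G̃(u,w,Φ) := ∫ [e^{Φ(y)}·(((1−uy)⁺)² − 1) + w(y)·((1−uy)⁻)²] λ dν(y) + 2u(b+λb_Y)`. -/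
noncomputable def Gt (ν : Measure ℝ) (lam b : ℝ) (w Φ : ℝ → ℝ) (u : ℝ) : ℝ :=
  lam * ∫ y, (Real.exp (Φ y) * ((max (1 - u * y) 0) ^ 2 - 1)
      + w y * (max (-(1 - u * y)) 0) ^ 2) ∂ν
    + 2 * u * (b + lam * ∫ y, y ∂ν)

lemma sq_max_add_sq_max_neg (t : ℝ) : max t 0 ^ 2 + max (-t) 0 ^ 2 = t ^ 2 := by
  rcases le_total t 0 with ht | ht
  · rw [max_eq_right ht, max_eq_left (neg_nonneg.mpr ht)]; ring
  · rw [max_eq_left ht, max_eq_right (neg_nonpos.mpr ht)]; ring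

lemma sq_max_neg_one_sub_le (s : ℝ) : max (-(1 - s)) 0 ^ 2 ≤ s ^ 2 := by
  rcases le_total s 1 with hs | hs
  · rw [max_eq_right (by linarith)]; nlinarith
  · rw [max_eq_left (by linarith)]; nlinarith

lemma sub_le_mul_sq_max_add_mul_sq_max_neg {a B e w : ℝ} (hae : a ≤ e) (heB : e ≤ B)
    (haw : a ≤ w) (t : ℝ) :
    a * t ^ 2 - B ≤ e * (max t 0 ^ 2 - 1) + w * max (-t) 0 ^ 2 := by
  rw [← sq_max_add_sq_max_neg t]
  linarith [mul_le_mul_of_nonneg_right hae (sq_nonneg (max t 0)),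
    mul_le_mul_of_nonneg_right haw (sq_nonneg (max (-t) 0))]

lemma integral_one_sub_mul_sq {ν : Measure ℝ} [IsProbabilityMeasure ν]
    (hy : Integrable (fun y => y) ν) (hy2 : Integrable (fun y => y ^ 2) ν) (u : ℝ) :
    ∫ y, (1 - u * y) ^ 2 ∂ν = 1 - 2 * u * (∫ y, y ∂ν) + u ^ 2 * ∫ y, y ^ 2 ∂ν := by
  have hexpand : (fun y : ℝ => (1 - u * y) ^ 2) = fun y => 1 - 2 * u * y + u ^ 2 * y ^ 2 := by
    ext y; ring
  have hlin : Integrable (fun y : ℝ => 1 - 2 * u * y) ν :=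
    (integrable_const _).sub (hy.const_mul _)
  rw [hexpand, integral_add hlin (hy2.const_mul _), integral_sub (integrable_const _)
    (hy.const_mul _), integral_const_mul, integral_const_mul]
  simp

lemma integrable_one_sub_mul_sq {ν : Measure ℝ} [IsFiniteMeasure ν]
    (hy : Integrable (fun y => y) ν) (hy2 : Integrable (fun y => y ^ 2) ν) (u : ℝ) :
    Integrable (fun y => (1 - u * y) ^ 2) ν := by
  have hexpand : (fun y : ℝ => (1 - u * y) ^ 2) = fun y => 1 - 2 * u * y + u ^ 2 * y ^ 2 := by
    ext y; ring
  rw [hexpand]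
  exact ((integrable_const _).sub (hy.const_mul _)).add (hy2.const_mul _)

noncomputable def GtIntegrand (w Φ : ℝ → ℝ) (u y : ℝ) : ℝ :=
  exp (Φ y) * (max (1 - u * y) 0 ^ 2 - 1) + w y * max (-(1 - u * y)) 0 ^ 2

lemma Gt_eq (ν : Measure ℝ) (lam b : ℝ) (w Φ : ℝ → ℝ) (u : ℝ) :
    Gt ν lam b w Φ u = lam * ∫ y, GtIntegrand w Φ u y ∂ν + 2 * u * (b + lam * ∫ y, y ∂ν) :=
  rfl

lemma Gt_zero (ν : Measure ℝ) (lam b : ℝ) (w Φ : ℝ → ℝ) : Gt ν lam b w Φ 0 = 0 := by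
  simp [Gt_eq, GtIntegrand]

section Integrand

variable {ν : Measure ℝ} {w Φ : ℝ → ℝ} {B : ℝ}

lemma integrable_GtIntegrand [IsFiniteMeasure ν] (hΦ : Measurable Φ) (hw : Measurable w)
    (hΦB : ∀ᵐ y ∂ν, exp (Φ y) ≤ B) (hw0 : ∀ᵐ y ∂ν, 0 ≤ w y)
    (hy : Integrable (fun y => y) ν) (hy2 : Integrable (fun y => y ^ 2) ν)
    (hwy2 : Integrable (fun y => w y * y ^ 2) ν) (u : ℝ) :
    Integrable (GtIntegrand w Φ u) ν := by
  have hdom : Integrable (fun y => B * ((1 - u * y) ^ 2 + 1) + u ^ 2 * (w y * y ^ 2)) ν :=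
    (((integrable_one_sub_mul_sq hy hy2 u).add (integrable_const _)).const_mul _).add
      (hwy2.const_mul _)
  refine hdom.mono' (by unfold GtIntegrand; fun_prop) ?_
  filter_upwards [hΦB, hw0] with y hyB hyw
  have hpos := sq_max_add_sq_max_neg (1 - u * y)
  have hneg := sq_max_neg_one_sub_le (u * y)
  have hexp := exp_pos (Φ y)
  rw [GtIntegrand, Real.norm_eq_abs, abs_le]
  constructor <;> nlinarith [sq_nonneg (max (1 - u * y) 0), sq_nonneg (max (-(1 - u * y)) 0),
    mul_le_mul_of_nonneg_left hneg hyw]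

lemma integral_GtIntegrand_ge [IsProbabilityMeasure ν] {a : ℝ} (hΦ : Measurable Φ)
    (hw : Measurable w) (hΦa : ∀ᵐ y ∂ν, a ≤ exp (Φ y)) (hΦB : ∀ᵐ y ∂ν, exp (Φ y) ≤ B)
    (hwa : ∀ᵐ y ∂ν, a ≤ w y) (hw0 : ∀ᵐ y ∂ν, 0 ≤ w y)
    (hy : Integrable (fun y => y) ν) (hy2 : Integrable (fun y => y ^ 2) ν)
    (hwy2 : Integrable (fun y => w y * y ^ 2) ν) (u : ℝ) :
    a * (1 - 2 * u * (∫ y, y ∂ν) + u ^ 2 * ∫ y, y ^ 2 ∂ν) - B ≤ ∫ y, GtIntegrand w Φ u y ∂ν := by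
  have hlower : Integrable (fun y => a * (1 - u * y) ^ 2 - B) ν :=
    ((integrable_one_sub_mul_sq hy hy2 u).const_mul a).sub (integrable_const B)
  calc a * (1 - 2 * u * (∫ y, y ∂ν) + u ^ 2 * ∫ y, y ^ 2 ∂ν) - B
      = ∫ y, (a * (1 - u * y) ^ 2 - B) ∂ν := by
        rw [integral_sub ((integrable_one_sub_mul_sq hy hy2 u).const_mul a) (integrable_const B),
          integral_const_mul, integral_one_sub_mul_sq hy hy2]
        simp
    _ ≤ ∫ y, GtIntegrand w Φ u y ∂ν := by
      refine integral_mono_ae hlower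
        (integrable_GtIntegrand hΦ hw hΦB hw0 hy hy2 hwy2 u) ?_
      filter_upwards [hΦa, hΦB, hwa] with y hya hyB hyw
      exact sub_le_mul_sq_max_add_mul_sq_max_neg hya hyB hyw _

end Integrand

lemma quadratic_pos_of_lt {A B C u : ℝ} (hA : 0 < A) (hu1 : 1 ≤ u)
    (hu : (|B| + |C|) / A < u) : 0 < A * u ^ 2 + B * u + C := by
  rw [div_lt_iff₀ hA] at hu
  nlinarith [neg_abs_le B, neg_abs_le C, abs_nonneg B, abs_nonneg C]

lemma sInf_image_Ici_eq_sInf_image_Icc {α β : Type*} [LinearOrder α]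
    [ConditionallyCompleteLinearOrder β] {f : α → β} {a c : α} (hac : a ≤ c)
    (hf : ∀ u, c < u → f a ≤ f u) : sInf (f '' Ici a) = sInf (f '' Icc a c) := by
  apply csInf_eq_csInf_of_forall_exists_le
  · rintro _ ⟨u, hau, rfl⟩
    rcases le_or_gt u c with huc | hcu
    · exact ⟨f u, mem_image_of_mem f ⟨hau, huc⟩, le_rfl⟩
    · exact ⟨f a, mem_image_of_mem f ⟨le_rfl, hac⟩, hf u hcu⟩
  · rintro _ ⟨u, hu, rfl⟩
    exact ⟨f u, mem_image_of_mem f (Icc_subset_Ici_self hu), le_rfl⟩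

theorem stmt9_general (ν : Measure ℝ) [IsProbabilityMeasure ν]
    (lam b : ℝ) (hlam : 0 < lam)
    (hy : Integrable (fun y => y) ν)
    (hy2 : Integrable (fun y => y ^ 2) ν)
    (hσY : 0 < ∫ y, y ^ 2 ∂ν)
    (ϱ : ℝ) (hϱ0 : 0 < ϱ) :
    ∃ c₃ : ℝ, 0 < c₃ ∧
      ∀ Φ w : ℝ → ℝ, Measurable Φ → Measurable w →
        (∀ᵐ y ∂ν, ϱ ≤ Real.exp (Φ y) ∧ Real.exp (Φ y) ≤ ϱ⁻¹) →
        (∀ᵐ y ∂ν, ϱ ≤ w y) →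
        Integrable (fun y => w y * y ^ 2) ν →
        ((∀ u : ℝ, 0 ≤ u →
            Gt ν lam b w Φ u
              ≥ ϱ * lam * (∫ y, y ^ 2 ∂ν) * u ^ 2
                - 2 * u * (ϱ * lam * (∫ y, y ∂ν) - (b + lam * ∫ y, y ∂ν))
                + ϱ * lam - lam * ϱ⁻¹) ∧
          (∀ u : ℝ, c₃ < u → 0 < Gt ν lam b w Φ u) ∧
          Gt ν lam b w Φ 0 = 0 ∧
          sInf (Gt ν lam b w Φ '' Set.Ici 0) = sInf (Gt ν lam b w Φ '' Set.Icc 0 c₃)) := by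
  set A := ϱ * lam * ∫ y, y ^ 2 ∂ν
  set B := -2 * (ϱ * lam * (∫ y, y ∂ν) - (b + lam * ∫ y, y ∂ν))
  set C := ϱ * lam - lam * ϱ⁻¹
  have hA : 0 < A := by positivity
  refine ⟨max 1 ((|B| + |C|) / A), one_pos.trans_le (le_max_left _ _), ?_⟩
  intro Φ w hΦ hw hΦϱ hwϱ hwy2
  have hG : ∀ u, A * u ^ 2 + B * u + C ≤ Gt ν lam b w Φ u := fun u => by
    have hint := integral_GtIntegrand_ge hΦ hw (hΦϱ.mono fun _ h => h.1)
      (hΦϱ.mono fun _ h => h.2) hwϱ (hwϱ.mono fun _ h => hϱ0.le.trans h) hy hy2 hwy2 u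
    rw [Gt_eq]
    linarith [mul_le_mul_of_nonneg_left hint hlam.le]
  have hpos : ∀ u, max 1 ((|B| + |C|) / A) < u → 0 < Gt ν lam b w Φ u := fun u hu =>
    (quadratic_pos_of_lt hA ((le_max_left _ _).trans hu.le)
      ((le_max_right _ _).trans_lt hu)).trans_le (hG u)
  refine ⟨fun u _ => by linarith [hG u], hpos, Gt_zero ν lam b w Φ, ?_⟩
  exact sInf_image_Ici_eq_sInf_image_Icc (zero_le_one.trans (le_max_left _ _))
    fun u hu => (Gt_zero ν lam b w Φ).trans_le (hpos u hu).le

/-- for `0 < ϱ < 1` there is `c₃ > 0` (depending only on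
`ϱ, λ, b, b_Y, σ_Y`) such that for all admissible `Φ, w` (with `ϱ ≤ e^Φ ≤ ϱ⁻¹`, `w ≥ ϱ`
ν-a.e. and `∫ w y² dν < ∞`): for every `u ≥ 0`,
`G̃(u,w,Φ) ≥ ϱλσ_Y²u² − 2u(ϱλb_Y − (b+λb_Y)) + ϱλ − λϱ⁻¹`; `G̃(u,w,Φ) > 0` for `u > c₃`;
`G̃(0,w,Φ) = 0`; and `inf_{u≥0} G̃ = inf_{0≤u≤c₃} G̃`. -/
theorem stmt9 (ν : Measure ℝ) [IsProbabilityMeasure ν]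
    (hν0 : ∀ᵐ y ∂ν, 0 ≤ y)
    (lam b : ℝ) (hlam : 0 < lam) (hb : 0 < b)
    (hy : Integrable (fun y => y) ν)
    (hy2 : Integrable (fun y => y ^ 2) ν)
    (hbY : 0 < ∫ y, y ∂ν) (hσY : 0 < ∫ y, y ^ 2 ∂ν)
    (ϱ : ℝ) (hϱ0 : 0 < ϱ) (hϱ1 : ϱ < 1) :
    ∃ c₃ : ℝ, 0 < c₃ ∧
      ∀ Φ w : ℝ → ℝ, Measurable Φ → Measurable w →
        (∀ᵐ y ∂ν, ϱ ≤ Real.exp (Φ y) ∧ Real.exp (Φ y) ≤ ϱ⁻¹) →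
        (∀ᵐ y ∂ν, ϱ ≤ w y) →
        Integrable (fun y => w y * y ^ 2) ν →
        ((∀ u : ℝ, 0 ≤ u →
            Gt ν lam b w Φ u
              ≥ ϱ * lam * (∫ y, y ^ 2 ∂ν) * u ^ 2
                - 2 * u * (ϱ * lam * (∫ y, y ∂ν) - (b + lam * ∫ y, y ∂ν))
                + ϱ * lam - lam * ϱ⁻¹) ∧
          (∀ u : ℝ, c₃ < u → 0 < Gt ν lam b w Φ u) ∧
          Gt ν lam b w Φ 0 = 0 ∧
          sInf (Gt ν lam b w Φ '' Set.Ici 0) = sInf (Gt ν lam b w Φ '' Set.Icc 0 c₃)) :=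
  stmt9_general ν lam b hlam hy hy2 hσY ϱ hϱ0
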